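/- Let E be an elliptic curve over a local field K_v of residue characteristic ℓ ≠ p with good reduction, and let L_w/K_v be a totally ramified cyclic extension of degree p with group G. Then dim_{𝔽_p} H^1(G, E(L_w)) = dim_{𝔽_p} Ẽ(k_v)[p], where Ẽ(k_v)[p] is the p-torsion of the reduced curve over the residue field. -/

import Mathlib

/-!
STATEMENT 9: Let `E` be an elliptic curve with good reduction over a local field `K_v`
of residue characteristic `ℓ ≠ p`, and `L_w/K_v` a totally ramified cyclic extension of
degree `p` with group `G = ⟨σ⟩`.  Then
`dim_{𝔽_p} H¹(G, E(L_w)) = dim_{𝔽_p} Ẽ(k_v)[p]`.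

Formalization: `A = E(L_w)` with the action of a generator `σ` of `G`;
`red : A →+ R` is the (surjective) reduction map onto `R = Ẽ(k_w) = Ẽ(k_v)`; total
ramification means `G` acts trivially on the residue field, i.e. `red ∘ σ = red`;
`ℓ ≠ p` means the kernel of reduction (the formal group `E₁(L_w)`) is uniquely
`p`-divisible.  Both `H¹(G,E(L_w))` and `Ẽ(k_v)[p]` are elementary abelian `p`-groups,
so equality of `𝔽_p`-dimensions is equivalent to equality of cardinalities.
-/


section CyclicCohomology

variable {A : Type*} [AddCommGroup A]

/-- The norm (trace) map of the cyclic group generated by `σ` (of order `p`):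
`a ↦ ∑_{i<p} σ^i a`. -/
def cnorm (σ : A ≃+ A) (p : ℕ) (a : A) : A := ∑ i ∈ Finset.range p, (i • (σ : AddAut A)) a

/-- 1-cocycles of the cyclic group `⟨σ⟩` (of order `p`) with values in the
`σ`-stable subgroup `B`: elements of `B` killed by the norm. -/
abbrev Z1 (σ : A ≃+ A) (p : ℕ) (B : AddSubgroup A) :=
  {a : A // a ∈ B ∧ cnorm σ p a = 0}

/-- `H¹(⟨σ⟩, B)`: 1-cocycles modulo coboundaries `σ b - b`, `b ∈ B`. -/
abbrev H1 (σ : A ≃+ A) (p : ℕ) (B : AddSubgroup A) :=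
  Quot fun x y : Z1 σ p B => ∃ b ∈ B, x.1 - y.1 = σ b - b

/-- `H²(⟨σ⟩, B)`: fixed points of `B` modulo norms of elements of `B`. -/
abbrev H2 (σ : A ≃+ A) (p : ℕ) (B : AddSubgroup A) :=
  Quot fun x y : {a : A // a ∈ B ∧ σ a = a} => ∃ b ∈ B, x.1 - y.1 = cnorm σ p b

end CyclicCohomology

/-!
Reduction `E(L_w) → Ẽ(k_v)` is `G`-equivariant with trivial action on the target, so it kills
coboundaries and, applied to a cocycle `a` (an element with `N a = 0`, where `N = cnorm σ p`), lands in `Ẽ(k_v)[p]`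
because `red (N a) = p • red a`. The resulting map `H¹(G, E(L_w)) → Ẽ(k_v)[p]` is a bijection
because the kernel `E₁(L_w)` of reduction is uniquely `p`-divisible:

* if `d` is a cocycle with `red d = 0`, write `d = p • c` in the kernel; then `p • N c = N d = 0`
  forces `N c = 0`, and the telescoping sum `b = ∑ i • σⁱ c` satisfies `σ b - b = p • c = d`;
* if `p • z = 0`, lift `z` to `a`; then `N a` lies in the kernel, so `N a = p • c` there, and
  `N c = N a` because both lie in the kernel and have the same `p`-multiple (`N a` is
  `σ`-fixed, so `N (N a) = p • N a`); hence `a - c` is a cocycle reducing to `z`.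
-/

section CyclicNorm

variable {A : Type*} [AddCommGroup A] (σ : A ≃+ A)

lemma nsmul_succ_apply (i : ℕ) (a : A) :
    ((i + 1) • (σ : AddAut A)) a = σ ((i • (σ : AddAut A)) a) := by
  rw [succ_nsmul']; rfl

lemma nsmul_apply_of_apply_eq {x : A} (hx : σ x = x) (i : ℕ) :
    (i • (σ : AddAut A)) x = x := by
  induction i with
  | zero => rfl
  | succ n ih => rw [nsmul_succ_apply, ih, hx]

variable {σ} {p : ℕ}

lemma cnorm_sub (x y : A) : cnorm σ p (x - y) = cnorm σ p x - cnorm σ p y := by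
  simp [cnorm, Finset.sum_sub_distrib]

lemma cnorm_nsmul (n : ℕ) (x : A) : cnorm σ p (n • x) = n • cnorm σ p x := by
  simp [cnorm, Finset.smul_sum]

lemma cnorm_eq_nsmul_of_apply_eq {x : A} (hx : σ x = x) : cnorm σ p x = p • x := by
  simp [cnorm, nsmul_apply_of_apply_eq σ hx]

lemma apply_cnorm (hσ : p • (σ : AddAut A) = 0) (a : A) : σ (cnorm σ p a) = cnorm σ p a := by
  have h := (Finset.sum_range_succ' (fun i => (i • (σ : AddAut A)) a) p).symm.trans
    (Finset.sum_range_succ _ p)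
  simp only [hσ, zero_nsmul, AddAut.zero_apply, add_left_inj] at h
  simpa [cnorm, map_sum, nsmul_succ_apply] using h

lemma apply_sub_self_sum_nsmul (n : ℕ) (c : A) :
    σ (∑ i ∈ Finset.range n, i • (i • (σ : AddAut A)) c)
      - ∑ i ∈ Finset.range n, i • (i • (σ : AddAut A)) c
      = n • (n • (σ : AddAut A)) c - σ (cnorm σ n c) := by
  induction n with
  | zero => simp [cnorm]
  | succ n ih =>
    have hσn : σ ((n • (σ : AddAut A)) c) = ((n + 1) • (σ : AddAut A)) c :=
      (nsmul_succ_apply σ n c).symm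
    rw [cnorm] at ih ⊢
    rw [Finset.sum_range_succ, map_add, map_nsmul, hσn, Finset.sum_range_succ, map_add, hσn,
      ← sub_eq_zero, ← sub_eq_zero.2 ih]
    generalize ((n + 1) • (σ : AddAut A)) c = y
    rw [succ_nsmul]
    abel

lemma exists_apply_sub_self_eq_nsmul (hσ : p • (σ : AddAut A) = 0) {c : A}
    (hc : cnorm σ p c = 0) : ∃ b, σ b - b = p • c :=
  ⟨_, by rw [apply_sub_self_sum_nsmul, hc, map_zero, sub_zero, hσ, AddAut.zero_apply]⟩

end CyclicNorm

section Reduction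

variable {A R : Type*} [AddCommGroup A] [AddCommGroup R] {σ : A ≃+ A} {p : ℕ} {red : A →+ R}

lemma map_nsmul_apply_of_map_apply (htriv : ∀ x, red (σ x) = red x) (i : ℕ) (a : A) :
    red ((i • (σ : AddAut A)) a) = red a := by
  induction i with
  | zero => rfl
  | succ n ih => rw [nsmul_succ_apply, htriv, ih]

lemma map_cnorm_of_map_apply (htriv : ∀ x, red (σ x) = red x) (a : A) :
    red (cnorm σ p a) = p • red a := by
  simp [cnorm, map_nsmul_apply_of_map_apply htriv]

lemma eq_of_map_eq_of_nsmul_eq (hdiv : Function.Bijective fun x : red.ker => p • x) {a b : A}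
    (hred : red a = red b) (hp : p • a = p • b) : a = b := by
  have h : (⟨a - b, by simp [hred]⟩ : red.ker) = 0 :=
    hdiv.1 <| Subtype.ext <| by simp [smul_sub, hp]
  exact sub_eq_zero.1 (congrArg Subtype.val h)

lemma exists_nsmul_eq_of_map_eq_zero (hdiv : Function.Bijective fun x : red.ker => p • x)
    {a : A} (ha : red a = 0) : ∃ c, red c = 0 ∧ p • c = a := by
  obtain ⟨c, hc⟩ := hdiv.2 ⟨a, ha⟩
  exact ⟨c, c.2, congrArg Subtype.val hc⟩

lemma exists_apply_sub_self_eq_of_map_eq_zero (hσ : p • (σ : AddAut A) = 0)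
    (htriv : ∀ x, red (σ x) = red x) (hdiv : Function.Bijective fun x : red.ker => p • x)
    {d : A} (hd : red d = 0) (hNd : cnorm σ p d = 0) : ∃ b, σ b - b = d := by
  obtain ⟨c, hc, rfl⟩ := exists_nsmul_eq_of_map_eq_zero hdiv hd
  have hNc : cnorm σ p c = 0 := eq_of_map_eq_of_nsmul_eq hdiv
    (by rw [map_cnorm_of_map_apply htriv, hc, smul_zero, map_zero])
    (by rw [← cnorm_nsmul, hNd, smul_zero])
  exact exists_apply_sub_self_eq_nsmul hσ hNc

variable (σ p red) in
def H1.reduction (htriv : ∀ x, red (σ x) = red x) : H1 σ p ⊤ → {z : R // p • z = 0} :=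
  Quot.lift (fun a => ⟨red a.1, by rw [← map_cnorm_of_map_apply htriv, a.2.2, map_zero]⟩)
    (by
      rintro a a' ⟨b, -, hb⟩
      refine Subtype.ext (sub_eq_zero.1 ?_)
      rw [← map_sub, hb, map_sub, htriv, sub_self])

lemma H1.reduction_injective (hσ : p • (σ : AddAut A) = 0) (htriv : ∀ x, red (σ x) = red x)
    (hdiv : Function.Bijective fun x : red.ker => p • x) :
    Function.Injective (H1.reduction σ p red htriv) := by
  rintro ⟨a⟩ ⟨a'⟩ h
  have hred : red (a.1 - a'.1) = 0 := by
    rw [map_sub, sub_eq_zero]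
    exact congrArg Subtype.val h
  have hN : cnorm σ p (a.1 - a'.1) = 0 := by rw [cnorm_sub, a.2.2, a'.2.2, sub_self]
  obtain ⟨b, hb⟩ := exists_apply_sub_self_eq_of_map_eq_zero hσ htriv hdiv hred hN
  exact Quot.sound ⟨b, AddSubgroup.mem_top b, hb.symm⟩

lemma H1.reduction_surjective (hσ : p • (σ : AddAut A) = 0) (htriv : ∀ x, red (σ x) = red x)
    (hdiv : Function.Bijective fun x : red.ker => p • x) (hsurj : Function.Surjective red) :
    Function.Surjective (H1.reduction σ p red htriv) := by
  rintro ⟨z, hz⟩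
  obtain ⟨a, rfl⟩ := hsurj z
  have hNa : red (cnorm σ p a) = 0 := by rw [map_cnorm_of_map_apply htriv, hz]
  obtain ⟨c, hc, hcN⟩ := exists_nsmul_eq_of_map_eq_zero hdiv hNa
  have hNc : cnorm σ p c = cnorm σ p a := eq_of_map_eq_of_nsmul_eq hdiv
    (by rw [map_cnorm_of_map_apply htriv, hc, smul_zero, hNa])
    (by rw [← cnorm_nsmul, hcN, cnorm_eq_nsmul_of_apply_eq (apply_cnorm hσ a)])
  refine ⟨Quot.mk _ ⟨a - c, AddSubgroup.mem_top _, by rw [cnorm_sub, hNc, sub_self]⟩, ?_⟩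
  exact Subtype.ext (by simp [H1.reduction, hc])

end Reduction

theorem selmer_stmt_9_general {p : ℕ} {A R : Type*} [AddCommGroup A]
    [AddCommGroup R]
    (σ : A ≃+ A) (hσ : p • (σ : AddAut A) = 0)
    (red : A →+ R) (hsurj : Function.Surjective red)
    (htriv : ∀ x, red (σ x) = red x)
    (hdiv : Function.Bijective fun x : red.ker => p • x) :
    Nat.card (H1 σ p (⊤ : AddSubgroup A)) = Nat.card {z : R // p • z = 0} :=
  Nat.card_eq_of_bijective (H1.reduction σ p red htriv)
    ⟨H1.reduction_injective hσ htriv hdiv, H1.reduction_surjective hσ htriv hdiv hsurj⟩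

theorem selmer_stmt_9 {p : ℕ} (hp : p.Prime) {A R : Type*} [AddCommGroup A]
    [AddCommGroup R]
    (σ : A ≃+ A) (hσ : p • (σ : AddAut A) = 0)
    (red : A →+ R) (hsurj : Function.Surjective red)
    (htriv : ∀ x, red (σ x) = red x)
    (hdiv : Function.Bijective fun x : red.ker => p • x) :
    Nat.card (H1 σ p (⊤ : AddSubgroup A)) = Nat.card {z : R // p • z = 0} :=
  selmer_stmt_9_general σ hσ red hsurj htriv hdiv
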